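/- arXiv:2004.02198 — 3 statements merged into one kernel-verified Lean document; each statement's English description precedes it below -/
import Mathlib

section
/- Case 1 of the closed form of the convex conjugate (Lemma A.1): if the matrix M = [[A,B],[B,C]] is positive semidefinite, then the supremum defining F*(a,b) is attained at β* = M, and F*(a,b) = (b₁₁ − (1/2)a₁ − (1/2)a₂)·A + 2b₁₂·B + b₂₂·C − [ (A − β̄₁₁)² + 2(B − β̄₁₂)² + (C − β̄₂₂)² ]. -/
open scoped BigOperators
open Classical

noncomputable def Fcost (βbar : Matrix (Fin 2) (Fin 2) ℝ) (α : Fin 2 → ℝ)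
    (β : Matrix (Fin 2) (Fin 2) ℝ) : EReal :=
  if β.PosSemidef ∧ α 0 = -(1/2) * β 0 0 ∧ α 1 = -(1/2) * β 0 0 then
    ((∑ i : Fin 2, ∑ j : Fin 2, (β i j - βbar i j) ^ 2 : ℝ) : EReal)
  else ⊤

noncomputable def Fstar (βbar : Matrix (Fin 2) (Fin 2) ℝ) (a : Fin 2 → ℝ)
    (b : Matrix (Fin 2) (Fin 2) ℝ) : EReal :=
  ⨆ (α : Fin 2 → ℝ) (β : Matrix (Fin 2) (Fin 2) ℝ) (_ : β.IsSymm),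
    (((∑ i : Fin 2, α i * a i) + ∑ i : Fin 2, ∑ j : Fin 2, β i j * b i j : ℝ) : EReal)
      - Fcost βbar α β

/-- Lemma A.1, case 1: if `M = [[A,B],[B,C]]` is positive semidefinite,
the supremum defining `F*(a,b)` is attained at `β* = M`, with the stated value. -/
theorem stmt2 (βbar : Matrix (Fin 2) (Fin 2) ℝ) (hβbar : βbar.IsSymm)
    (a : Fin 2 → ℝ) (b : Matrix (Fin 2) (Fin 2) ℝ) (hb : b.IsSymm)
    (A B C : ℝ)
    (hA : A = βbar 0 0 + (1/2) * b 0 0 - (1/4) * a 0 - (1/4) * a 1)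
    (hB : B = βbar 0 1 + (1/2) * b 0 1)
    (hC : C = βbar 1 1 + (1/2) * b 1 1)
    (M : Matrix (Fin 2) (Fin 2) ℝ) (hM : M = !![A, B; B, C])
    (hMpsd : M.PosSemidef) :
    Fstar βbar a b =
      (((b 0 0 - (1/2) * a 0 - (1/2) * a 1) * A + 2 * b 0 1 * B + b 1 1 * C
        - ((A - βbar 0 0) ^ 2 + 2 * (B - βbar 0 1) ^ 2 + (C - βbar 1 1) ^ 2) : ℝ) : EReal)
    ∧
      (((∑ i : Fin 2, (fun _ : Fin 2 => -(1/2) * M 0 0) i * a i)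
          + ∑ i : Fin 2, ∑ j : Fin 2, M i j * b i j : ℝ) : EReal)
        - Fcost βbar (fun _ : Fin 2 => -(1/2) * M 0 0) M = Fstar βbar a b := by
  set V : ℝ := (b 0 0 - (1/2) * a 0 - (1/2) * a 1) * A + 2 * b 0 1 * B + b 1 1 * C
        - ((A - βbar 0 0) ^ 2 + 2 * (B - βbar 0 1) ^ 2 + (C - βbar 1 1) ^ 2) with hV
  have hb10 : b 1 0 = b 0 1 := by
    have := congrFun (congrFun hb.eq 1) 0; simpa [Matrix.transpose_apply] using this.symm
  have hbb10 : βbar 1 0 = βbar 0 1 := by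
    have := congrFun (congrFun hβbar.eq 1) 0; simpa [Matrix.transpose_apply] using this.symm
  -- upper bound
  have key : ∀ (α : Fin 2 → ℝ) (β : Matrix (Fin 2) (Fin 2) ℝ), β.IsSymm →
      (((∑ i : Fin 2, α i * a i) + ∑ i : Fin 2, ∑ j : Fin 2, β i j * b i j : ℝ) : EReal)
        - Fcost βbar α β ≤ (V : EReal) := by
    intro α β hβ
    unfold Fcost
    split_ifs with h
    · rw [← EReal.coe_sub, EReal.coe_le_coe_iff]
      obtain ⟨hpsd, h0, h1⟩ := h
      have hβ10 : β 1 0 = β 0 1 := by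
        have := congrFun (congrFun hβ.eq 1) 0; simpa [Matrix.transpose_apply] using this.symm
      simp only [Fin.sum_univ_two, hV]
      rw [h0, h1, hβ10, hb10, hbb10]
      subst hA; subst hB; subst hC
      nlinarith [sq_nonneg (β 0 0 - (βbar 0 0 + 1/2 * b 0 0 - 1/4 * a 0 - 1/4 * a 1)),
        sq_nonneg (β 0 1 - (βbar 0 1 + 1/2 * b 0 1)), sq_nonneg (β 1 1 - (βbar 1 1 + 1/2 * b 1 1))]
    · rw [EReal.sub_top]; exact bot_le
  -- value at the maximizer
  have hMs : M.IsSymm := by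
    rw [hM]; ext i j; fin_cases i <;> fin_cases j <;> simp [Matrix.transpose_apply]
  have hcond : M.PosSemidef ∧ (fun _ : Fin 2 => -(1/2) * M 0 0) 0 = -(1/2) * M 0 0 ∧
      (fun _ : Fin 2 => -(1/2) * M 0 0) 1 = -(1/2) * M 0 0 := ⟨hMpsd, rfl, rfl⟩
  have hval : (((∑ i : Fin 2, (fun _ : Fin 2 => -(1/2) * M 0 0) i * a i)
          + ∑ i : Fin 2, ∑ j : Fin 2, M i j * b i j : ℝ) : EReal)
        - Fcost βbar (fun _ : Fin 2 => -(1/2) * M 0 0) M = (V : EReal) := by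
    unfold Fcost
    rw [if_pos hcond, ← EReal.coe_sub, EReal.coe_eq_coe_iff]
    have h00 : M 0 0 = A := by rw [hM]; simp
    have h01 : M 0 1 = B := by rw [hM]; simp
    have h10 : M 1 0 = B := by rw [hM]; simp
    have h11 : M 1 1 = C := by rw [hM]; simp
    simp only [Fin.sum_univ_two, hV]
    rw [h00, h01, h10, h11, hb10, hbb10]
    subst hA; subst hB; subst hC
    ring
  have hFeq : Fstar βbar a b = (V : EReal) := by
    apply le_antisymm
    · exact iSup_le fun α => iSup_le fun β => iSup_le fun hs => key α β hs
    · rw [← hval]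
      exact le_iSup_of_le _ (le_iSup_of_le M (le_iSup_of_le hMs le_rfl))
  exact ⟨hFeq, hval.trans hFeq.symm⟩
end

section
/- Case 2 of the closed form of the convex conjugate (Lemma A.1): if AC ≥ B² and A + C < 0, then the supremum defining F*(a,b) is attained at the zero matrix β* = 0, and F*(a,b) = −(β̄₁₁² + 2β̄₁₂² + β̄₂₂²). -/
open scoped BigOperators
open Classical

lemma aux_quad (A B C x y z : ℝ) (hAC : A * C ≥ B ^ 2) (hsum : A + C < 0)
    (hq : ∀ u v : ℝ, 0 ≤ x * u ^ 2 + 2 * z * (u * v) + y * v ^ 2) :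
    A * x + 2 * B * z + C * y ≤ 0 := by
  have hA0 : A ≤ 0 := by nlinarith [sq_nonneg B]
  have hC0 : C ≤ 0 := by nlinarith [sq_nonneg B]
  set s := Real.sqrt (-A) with hs
  set t := Real.sqrt (-C) with ht
  have hs2 : s ^ 2 = -A := Real.sq_sqrt (by linarith)
  have ht2 : t ^ 2 = -C := Real.sq_sqrt (by linarith)
  have hstnn : 0 ≤ s * t := mul_nonneg (Real.sqrt_nonneg _) (Real.sqrt_nonneg _)
  have hst2 : (s * t) ^ 2 = A * C := by rw [mul_pow, hs2, ht2]; ring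
  have hB1 : B ≤ s * t := by nlinarith
  have hB2 : -B ≤ s * t := by nlinarith
  have e1 : 0 ≤ -A * x + 2 * z * (s * t) + -C * y := by
    have h := hq s t; rw [hs2, ht2] at h; linarith
  have e2 : 0 ≤ -A * x - 2 * z * (s * t) + -C * y := by
    have h := hq s (-t); rw [hs2, neg_sq, ht2] at h
    have : s * -t = -(s * t) := by ring
    rw [this] at h; linarith
  rcases le_or_gt 0 z with hz | hz
  · have h := mul_le_mul_of_nonneg_right hB1 hz
    linarith
  · have h := mul_le_mul_of_nonpos_right hB2 hz.le
    linarith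

/-- Lemma A.1, case 2: if `AC ≥ B²` and `A + C < 0`, the supremum
defining `F*(a,b)` is attained at the zero matrix, and
`F*(a,b) = −(β̄₁₁² + 2β̄₁₂² + β̄₂₂²)`. -/
theorem stmt3 (βbar : Matrix (Fin 2) (Fin 2) ℝ) (hβbar : βbar.IsSymm)
    (a : Fin 2 → ℝ) (b : Matrix (Fin 2) (Fin 2) ℝ) (hb : b.IsSymm)
    (A B C : ℝ)
    (hA : A = βbar 0 0 + (1/2) * b 0 0 - (1/4) * a 0 - (1/4) * a 1)
    (hB : B = βbar 0 1 + (1/2) * b 0 1)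
    (hC : C = βbar 1 1 + (1/2) * b 1 1)
    (hAC : A * C ≥ B ^ 2) (hsum : A + C < 0) :
    Fstar βbar a b =
      ((-(βbar 0 0 ^ 2 + 2 * βbar 0 1 ^ 2 + βbar 1 1 ^ 2) : ℝ) : EReal)
    ∧
      (((∑ i : Fin 2, (fun _ : Fin 2 => (0 : ℝ)) i * a i)
          + ∑ i : Fin 2, ∑ j : Fin 2, (0 : Matrix (Fin 2) (Fin 2) ℝ) i j * b i j : ℝ) : EReal)
        - Fcost βbar (fun _ : Fin 2 => (0 : ℝ)) 0 = Fstar βbar a b := by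
  have hβbar10 : βbar 1 0 = βbar 0 1 := hβbar.apply 0 1
  have hb10 : b 1 0 = b 0 1 := hb.apply 0 1
  set K : ℝ := βbar 0 0 ^ 2 + 2 * βbar 0 1 ^ 2 + βbar 1 1 ^ 2 with hK
  -- value at zero
  have hzero : Fcost βbar (fun _ : Fin 2 => (0:ℝ)) 0 = ((K : ℝ) : EReal) := by
    rw [Fcost, if_pos ⟨Matrix.PosSemidef.zero, by simp, by simp⟩]
    congr 1
    simp [Fin.sum_univ_two, hK, hβbar10]
    ring
  have hval : (((∑ i : Fin 2, (fun _ : Fin 2 => (0 : ℝ)) i * a i)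
          + ∑ i : Fin 2, ∑ j : Fin 2, (0 : Matrix (Fin 2) (Fin 2) ℝ) i j * b i j : ℝ) : EReal)
        - Fcost βbar (fun _ : Fin 2 => (0 : ℝ)) 0 = ((-K : ℝ) : EReal) := by
    rw [hzero, ← EReal.coe_sub]
    norm_num
  -- upper bound
  have key : ∀ (α : Fin 2 → ℝ) (β : Matrix (Fin 2) (Fin 2) ℝ), β.IsSymm →
      (((∑ i : Fin 2, α i * a i) + ∑ i : Fin 2, ∑ j : Fin 2, β i j * b i j : ℝ) : EReal)
        - Fcost βbar α β ≤ ((-K : ℝ) : EReal) := by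
    intro α β hsym
    rw [Fcost]
    split_ifs with h
    · obtain ⟨hpsd, hα0, hα1⟩ := h
      rw [← EReal.coe_sub, EReal.coe_le_coe_iff]
      have hβ10 : β 1 0 = β 0 1 := hsym.apply 0 1
      have hq : ∀ u v : ℝ,
          0 ≤ β 0 0 * u ^ 2 + 2 * β 0 1 * (u * v) + β 1 1 * v ^ 2 := by
        intro u v
        have h2 := hpsd.dotProduct_mulVec_nonneg ![u, v]
        simp only [dotProduct, Matrix.mulVec, Fin.sum_univ_two, Matrix.cons_val_zero,
          Matrix.cons_val_one, Matrix.head_cons, star_trivial, Pi.star_apply, hβ10] at h2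
        nlinarith [h2]
      have haux : A * β 0 0 + 2 * B * β 0 1 + C * β 1 1 ≤ 0 :=
        aux_quad A B C (β 0 0) (β 1 1) (β 0 1) hAC hsum hq
      rw [hA, hB, hC] at haux
      simp only [Fin.sum_univ_two, hα0, hα1, hβ10, hb10, hβbar10, hK]
      nlinarith [haux, sq_nonneg (β 0 0), sq_nonneg (β 0 1), sq_nonneg (β 1 1)]
    · rw [EReal.sub_top]
      exact bot_le
  have hle : Fstar βbar a b ≤ ((-K : ℝ) : EReal) := by
    rw [Fstar]
    exact iSup_le fun α => iSup_le fun β => iSup_le fun hsym => key α β hsym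
  have hge : ((-K : ℝ) : EReal) ≤ Fstar βbar a b := by
    rw [Fstar]
    refine le_iSup_of_le (fun _ : Fin 2 => (0:ℝ)) ?_
    refine le_iSup_of_le (0 : Matrix (Fin 2) (Fin 2) ℝ) ?_
    refine le_iSup_of_le (by simp [Matrix.IsSymm]) ?_
    exact le_of_eq hval.symm
  have hmain : Fstar βbar a b = ((-K : ℝ) : EReal) := le_antisymm hle hge
  exact ⟨hmain, hval.trans hmain.symm⟩
end

section
/- Case 3 of the closed form of the convex conjugate (Lemma A.1): suppose M = [[A,B],[B,C]] is not positive semidefinite and it is not the case that both AC ≥ B² and A + C < 0. Then 4B² + (A−C)² > 0 (so λ₊ and λ₋ are well defined), and F*(a,b) equals the maximum over β ∈ {λ₊, λ₋} of (b₁₁ − (1/2)a₁ − (1/2)a₂)β₁₁ + 2b₁₂β₁₂ + b₂₂β₂₂ − Σ_{i,j=1}^2 (β_{ij} − β̄_{ij})², and this maximum is attained in the supremum defining F*(a,b). -/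
open scoped BigOperators
open Classical

lemma psd2 (p y q : ℝ) (hp : 0 ≤ p) (hq : 0 ≤ q) (hdet : y^2 ≤ p*q) :
    (!![p,y;y,q] : Matrix (Fin 2) (Fin 2) ℝ).PosSemidef := by
  refine Matrix.PosSemidef.of_dotProduct_mulVec_nonneg ?_ ?_
  · ext i j; fin_cases i <;> fin_cases j <;> simp [Matrix.conjTranspose_apply]
  · intro x
    have hx : star x = x := by ext i; simp
    rw [hx]
    simp only [Matrix.mulVec, dotProduct, Fin.sum_univ_two,
      Matrix.cons_val', Matrix.cons_val_zero, Matrix.cons_val_one,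
      Matrix.head_cons, Matrix.head_fin_const, Matrix.empty_val',
      Matrix.cons_val_fin_one, Matrix.of_apply]
    rcases eq_or_lt_of_le (add_nonneg hp hq) with h | h
    · have hp0 : p = 0 := by linarith
      have hq0 : q = 0 := by linarith
      have hy : y = 0 := by nlinarith
      simp [hp0, hq0, hy]
    · nlinarith [sq_nonneg (p * x 0 + y * x 1), sq_nonneg (y * x 0 + q * x 1),
        mul_nonneg (sub_nonneg.2 hdet) (sq_nonneg (x 0)),
        mul_nonneg (sub_nonneg.2 hdet) (sq_nonneg (x 1)), h]

lemma psd_lam (x y : ℝ) :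
    (!![x + Real.sqrt (x^2+y^2), y; y, -x + Real.sqrt (x^2+y^2)] :
      Matrix (Fin 2) (Fin 2) ℝ).PosSemidef := by
  have hr2 : (Real.sqrt (x^2+y^2))^2 = x^2+y^2 := Real.sq_sqrt (by positivity)
  have hrx : |x| ≤ Real.sqrt (x^2+y^2) := by
    rw [← Real.sqrt_sq_eq_abs]
    exact Real.sqrt_le_sqrt (by nlinarith)
  obtain ⟨h1, h2⟩ := abs_le.mp hrx
  exact psd2 _ _ _ (by linarith) (by linarith) (le_of_eq (by nlinarith))

lemma psd_entries (β : Matrix (Fin 2) (Fin 2) ℝ) (hψ : β.PosSemidef) :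
    0 ≤ β 0 0 ∧ 0 ≤ β 1 1 ∧ (β 0 1)^2 ≤ β 0 0 * β 1 1 ∧ β 1 0 = β 0 1 := by
  have hsβ : β 1 0 = β 0 1 := by
    have h := congrFun (congrFun hψ.1 0) 1
    simpa [Matrix.conjTranspose_apply] using h
  have hquad : ∀ x0 x1 : ℝ, 0 ≤ β 0 0 * x0^2 + 2 * β 0 1 * x0 * x1 + β 1 1 * x1^2 := by
    intro x0 x1
    have h := hψ.dotProduct_mulVec_nonneg ![x0, x1]
    rw [show (star ![x0, x1]) = ![x0, x1] by ext i; simp] at h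
    simp only [Matrix.mulVec, dotProduct, Fin.sum_univ_two,
      Matrix.cons_val_zero, Matrix.cons_val_one, Matrix.head_cons] at h
    rw [hsβ] at h; nlinarith [h]
  have hp : 0 ≤ β 0 0 := by have := hquad 1 0; linarith
  have hq : 0 ≤ β 1 1 := by have := hquad 0 1; linarith
  refine ⟨hp, hq, ?_, hsβ⟩
  have h3 := hquad (β 1 1) (-(β 0 1))
  have h4 := hquad (-(β 0 1)) (β 0 0)
  have h5 := hquad 1 1
  have h6 := hquad 1 (-1)
  by_contra hcon
  push_neg at hcon
  have hq0 : β 1 1 = 0 := by nlinarith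
  have hp0 : β 0 0 = 0 := by nlinarith
  nlinarith

lemma key' (A B C s u v p q y P Y Q : ℝ)
    (hs : 0 ≤ s) (hu : 0 ≤ u) (hv : 0 ≤ v) (huv : u*v = 4*B^2)
    (hP : P = A + s*u) (hY : Y = B - 2*s*B) (hQ : Q = C + s*v)
    (horth : P*u - 4*B*Y + Q*v = 0)
    (hp : 0 ≤ p) (hq : 0 ≤ q) (hpq : y^2 ≤ p*q) :
    (P-A)^2+2*(Y-B)^2+(Q-C)^2 ≤ (p-A)^2+2*(y-B)^2+(q-C)^2 := by
  have hip : 0 ≤ p*u - 4*B*y + q*v := by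
    nlinarith [sq_nonneg (p*u - q*v), mul_nonneg hp hu, mul_nonneg hq hv,
      mul_nonneg (mul_nonneg hp hu) (mul_nonneg hq hv), sq_nonneg (p*u + q*v - 4*B*y),
      mul_nonneg (mul_nonneg hp hq) (sq_nonneg B)]
  have horth2 : s*(P*u - 4*B*Y + Q*v) = 0 := by rw [horth]; ring
  subst hP hY hQ
  nlinarith [sq_nonneg (p - (A + s*u)), sq_nonneg (y - (B - 2*s*B)), sq_nonneg (q - (C + s*v)),
    mul_nonneg hs hip, horth2]

set_option maxHeartbeats 1000000 in
/-- Lemma A.1, case 3: if `M` is not positive semidefinite and it is not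
the case that both `AC ≥ B²` and `A + C < 0`, then `4B² + (A−C)² > 0` and `F*(a,b)`
equals the maximum of the objective over `β ∈ {λ₊, λ₋}`, attained in the supremum. -/
theorem stmt4 (βbar : Matrix (Fin 2) (Fin 2) ℝ) (hβbar : βbar.IsSymm)
    (a : Fin 2 → ℝ) (b : Matrix (Fin 2) (Fin 2) ℝ) (hb : b.IsSymm)
    (A B C : ℝ)
    (hA : A = βbar 0 0 + (1/2) * b 0 0 - (1/4) * a 0 - (1/4) * a 1)
    (hB : B = βbar 0 1 + (1/2) * b 0 1)
    (hC : C = βbar 1 1 + (1/2) * b 1 1)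
    (M : Matrix (Fin 2) (Fin 2) ℝ) (hM : M = !![A, B; B, C])
    (hMpsd : ¬ M.PosSemidef) (hcase2 : ¬ (A * C ≥ B ^ 2 ∧ A + C < 0))
    (D : ℝ) (hD : D = Real.sqrt (4 * B ^ 2 + (A - C) ^ 2))
    (xp xm yp ym : ℝ)
    (hxp : xp = (A - C) / 4 + (A ^ 2 - C ^ 2) / (4 * D))
    (hxm : xm = (A - C) / 4 - (A ^ 2 - C ^ 2) / (4 * D))
    (hyp : yp = B / 2 + B * (A + C) / (2 * D))
    (hym : ym = B / 2 - B * (A + C) / (2 * D))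
    (Lp Lm : Matrix (Fin 2) (Fin 2) ℝ)
    (hLp : Lp = !![xp + Real.sqrt (xp ^ 2 + yp ^ 2), yp;
                   yp, -xp + Real.sqrt (xp ^ 2 + yp ^ 2)])
    (hLm : Lm = !![xm + Real.sqrt (xm ^ 2 + ym ^ 2), ym;
                   ym, -xm + Real.sqrt (xm ^ 2 + ym ^ 2)])
    (obj : Matrix (Fin 2) (Fin 2) ℝ → ℝ)
    (hobj : ∀ β, obj β =
      (b 0 0 - (1/2) * a 0 - (1/2) * a 1) * β 0 0 + 2 * b 0 1 * β 0 1 + b 1 1 * β 1 1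
        - ∑ i : Fin 2, ∑ j : Fin 2, (β i j - βbar i j) ^ 2) :
    0 < 4 * B ^ 2 + (A - C) ^ 2
    ∧ Fstar βbar a b = ((max (obj Lp) (obj Lm) : ℝ) : EReal)
    ∧ ∃ βs : Matrix (Fin 2) (Fin 2) ℝ, (βs = Lp ∨ βs = Lm) ∧ βs.PosSemidef ∧
        Fstar βbar a b = ((obj βs : ℝ) : EReal) := by
  have hb10 : b 1 0 = b 0 1 := hb.apply 0 1
  have hβbar10 : βbar 1 0 = βbar 0 1 := hβbar.apply 0 1
  -- Step 1 : A*C < B^2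
  have hkey : A * C < B ^ 2 := by
    by_contra h
    push_neg at h
    have hT : 0 ≤ A + C := by
      by_contra h2; push_neg at h2; exact hcase2 ⟨h, h2⟩
    have hA0 : 0 ≤ A := by nlinarith [sq_nonneg B, sq_nonneg A]
    have hC0 : 0 ≤ C := by nlinarith [sq_nonneg B, sq_nonneg C]
    apply hMpsd
    rw [hM]
    exact psd2 A B C hA0 hC0 (by nlinarith)
  have part1 : 0 < 4 * B ^ 2 + (A - C) ^ 2 := by nlinarith [sq_nonneg (A+C)]
  have hD2 : D^2 = 4*B^2+(A-C)^2 := by rw [hD]; exact Real.sq_sqrt part1.le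
  have hDpos : 0 < D := by rw [hD]; exact Real.sqrt_pos.mpr part1
  have hD0 : D ≠ 0 := ne_of_gt hDpos
  have hTD : A + C < D := by nlinarith
  have hTD2 : -D < A + C := by nlinarith
  -- entries of Lp
  have hxp' : xp = (A-C)*(A+C+D)/(4*D) := by rw [hxp]; field_simp; ring
  have hyp' : yp = B*(A+C+D)/(2*D) := by rw [hyp]; field_simp; ring
  set s : ℝ := (D-(A+C))/(4*D) with hsdef
  set u : ℝ := D-(A-C) with hudef
  set v : ℝ := D+(A-C) with hvdef
  have hs4 : s*(4*D) = D-(A+C) := by rw [hsdef]; field_simp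
  have hs : 0 ≤ s := div_nonneg (by linarith) (by linarith)
  have huv : u*v = 4*B^2 := by rw [hudef, hvdef]; linear_combination hD2
  have hu : 0 ≤ u := by nlinarith [sq_nonneg B]
  have hv : 0 ≤ v := by nlinarith [sq_nonneg B]
  have hsq : xp^2+yp^2 = ((A+C+D)/4)^2 := by
    rw [hxp', hyp']; field_simp; linear_combination (-4)*(A+C+D)^2*hD2
  have hr : Real.sqrt (xp^2+yp^2) = (A+C+D)/4 := by
    rw [hsq, Real.sqrt_sq (by linarith)]
  have hPe : xp + Real.sqrt (xp^2+yp^2) = A + s*u := by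
    rw [hr, hxp', hsdef, hudef]; field_simp; ring
  have hYe : yp = B - 2*s*B := by rw [hyp', hsdef]; field_simp; ring
  have hQe : -xp + Real.sqrt (xp^2+yp^2) = C + s*v := by
    rw [hr, hxp', hsdef, hvdef]; field_simp; ring
  have horth : (A + s*u)*u - 4*B*(B - 2*s*B) + (C + s*v)*v = 0 := by
    rw [hudef, hvdef]; linear_combination (1-2*s)*hD2 + D*hs4
  -- Lp entries
  have hLp00 : Lp 0 0 = A + s*u := by rw [hLp]; simpa using hPe
  have hLp01 : Lp 0 1 = yp := by rw [hLp]; simp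
  have hLp10 : Lp 1 0 = yp := by rw [hLp]; simp
  have hLp11 : Lp 1 1 = C + s*v := by rw [hLp]; simpa using hQe
  have hLpPSD : Lp.PosSemidef := by rw [hLp]; exact psd_lam xp yp
  have hLmPSD : Lm.PosSemidef := by rw [hLm]; exact psd_lam xm ym
  have hLpSymm : Lp.IsSymm := by
    rw [hLp]; ext i j; fin_cases i <;> fin_cases j <;> simp [Matrix.transpose_apply]
  -- objective value formula
  have hval : ∀ β : Matrix (Fin 2) (Fin 2) ℝ, β 1 0 = β 0 1 →
      obj β = (A^2+2*B^2+C^2 - ((βbar 0 0)^2+2*(βbar 0 1)^2+(βbar 1 1)^2))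
        - ((β 0 0 - A)^2+2*(β 0 1 - B)^2+(β 1 1 - C)^2) := by
    intro β hsβ
    rw [hobj β, hA, hB, hC]
    simp only [Fin.sum_univ_two, hsβ, hβbar10]
    ring
  -- comparison: any PSD β has obj β ≤ obj Lp
  have hLpsym10 : Lp 1 0 = Lp 0 1 := hLp10.trans hLp01.symm
  have hcomp : ∀ β : Matrix (Fin 2) (Fin 2) ℝ, β.PosSemidef → obj β ≤ obj Lp := by
    intro β hψ
    obtain ⟨hp, hq, hpq, hsβ⟩ := psd_entries β hψ
    rw [hval β hsβ, hval Lp hLpsym10, hLp00, hLp01, hLp11]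
    have horth' : (A + s*u)*u - 4*B*yp + (C + s*v)*v = 0 := by rw [hYe]; exact horth
    have := key' A B C s u v (β 0 0) (β 1 1) (β 0 1) (A + s*u) yp (C + s*v)
      hs hu hv huv rfl hYe rfl horth' hp hq hpq
    linarith
  -- the supremand equals obj β on the feasible set
  have hfeas : ∀ (α : Fin 2 → ℝ) (β : Matrix (Fin 2) (Fin 2) ℝ), β 1 0 = β 0 1 →
      α 0 = -(1/2) * β 0 0 → α 1 = -(1/2) * β 0 0 →
      ((∑ i : Fin 2, α i * a i) + ∑ i : Fin 2, ∑ j : Fin 2, β i j * b i j)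
        - (∑ i : Fin 2, ∑ j : Fin 2, (β i j - βbar i j) ^ 2) = obj β := by
    intro α β hsβ h0 h1
    rw [hobj β]
    simp only [Fin.sum_univ_two, hsβ, h0, h1, hb10]
    ring
  -- upper bound
  have hub : Fstar βbar a b ≤ ((obj Lp : ℝ) : EReal) := by
    rw [Fstar]
    refine iSup_le fun α => iSup_le fun β => iSup_le fun hsymβ => ?_
    rw [Fcost]
    split_ifs with hcond
    · obtain ⟨hψ, h0, h1⟩ := hcond
      rw [← EReal.coe_sub, EReal.coe_le_coe_iff]
      rw [hfeas α β (hsymβ.apply 0 1) h0 h1]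
      exact hcomp β hψ
    · simp
  -- lower bound
  have hlb : ((obj Lp : ℝ) : EReal) ≤ Fstar βbar a b := by
    rw [Fstar]
    refine le_iSup_of_le (fun _ => -(1/2) * Lp 0 0) (le_iSup_of_le Lp (le_iSup_of_le hLpSymm ?_))
    rw [Fcost, if_pos ⟨hLpPSD, rfl, rfl⟩, ← EReal.coe_sub, EReal.coe_le_coe_iff]
    rw [hfeas _ Lp hLpsym10 rfl rfl]
  have hFstar : Fstar βbar a b = ((obj Lp : ℝ) : EReal) := le_antisymm hub hlb
  refine ⟨part1, ?_, ⟨Lp, Or.inl rfl, hLpPSD, hFstar⟩⟩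
  rw [hFstar, max_eq_left (hcomp Lm hLmPSD)]
end
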